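/- arXiv:math/0604023 — 3 statements merged into one kernel-verified Lean document; each statement's English description precedes it below -/
import Mathlib

section
/- For the cubic forms l₀ = X₀, l₁ = X₁, l₂ = X₂, the four cubics X₀³, X₁³, X₂³, X₀X₁X₂ have the property that for every nonzero linear form l = aX₀ + bX₁ + cX₂, there exists a nonzero linear combination of these four cubics divisible by l. -/
open MvPolynomial

theorem togliatti_system_satisfies_laplace_condition
    (a b c : ℂ) (h : ¬(a = 0 ∧ b = 0 ∧ c = 0)) :
    ∃ α : Fin 4 → ℂ, α ≠ 0 ∧
      (C a * X 0 + C b * X 1 + C c * X 2 : MvPolynomial (Fin 3) ℂ) ∣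
        (C (α 0) * X 0 ^ 3 + C (α 1) * X 1 ^ 3 + C (α 2) * X 2 ^ 3 +
          C (α 3) * (X 0 * X 1 * X 2)) := by
  refine ⟨![a^3, b^3, c^3, -(3*a*b*c)], ?_, ?_⟩
  · intro h0
    have ha : a^3 = 0 := congrFun h0 0
    have hb : b^3 = 0 := congrFun h0 1
    have hc : c^3 = 0 := congrFun h0 2
    exact h ⟨pow_eq_zero_iff (by norm_num) |>.mp ha,
      pow_eq_zero_iff (by norm_num) |>.mp hb,
      pow_eq_zero_iff (by norm_num) |>.mp hc⟩
  · refine ⟨C (a^2) * X 0 ^ 2 + C (b^2) * X 1 ^ 2 + C (c^2) * X 2 ^ 2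
      - C (a*b) * (X 0 * X 1) - C (b*c) * (X 1 * X 2) - C (a*c) * (X 0 * X 2), ?_⟩
    simp only [Matrix.cons_val_zero, Matrix.cons_val_one, Matrix.head_cons,
      Matrix.cons_val_two, Matrix.tail_cons, Matrix.cons_val_three,
      map_pow, map_mul, map_neg, map_ofNat]
    ring
end

section
/- Case n = 3 of hyperosculation to the Segre: let φ(X,Y,Z) = Σ α_{ijk} X_i Y_j Z_k be a trilinear form on (ℂ²)³ and (x, y, z) ∈ (ℂ² \ {0})³. If all second partial derivatives ∂²φ/∂X_i∂Y_j, ∂²φ/∂X_i∂Z_k, ∂²φ/∂Y_j∂Z_k vanish at the point with coordinates (x_iy_jz_k) (for all i,j,k ∈ {0,1}), then φ(X,Y,Z) = c·(x₁X₀ − x₀X₁)(y₁Y₀ − y₀Y₁)(z₁Z₀ − z₀Z₁) for some constant c. -/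
lemma segre13_ne_aux (x : Fin 2 → ℂ) (hx : x ≠ 0) : x 0 ≠ 0 ∨ x 1 ≠ 0 := by
  by_contra h
  push_neg at h
  apply hx
  funext i
  fin_cases i <;> simp [h.1, h.2]

lemma segre13_ker2 (x : Fin 2 → ℂ) (hx : x ≠ 0) (u0 u1 : ℂ)
    (h : u0 * x 0 + u1 * x 1 = 0) :
    ∃ t : ℂ, u0 = t * x 1 ∧ u1 = -(t * x 0) := by
  rcases segre13_ne_aux x hx with h0 | h1
  · refine ⟨-u1 / x 0, ?_, ?_⟩
    · rw [div_mul_eq_mul_div, eq_div_iff h0]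
      linear_combination h
    · field_simp
  · refine ⟨u0 / x 1, ?_, ?_⟩
    · field_simp
    · rw [div_mul_eq_mul_div, ← neg_div, eq_div_iff h1]
      linear_combination h

theorem segre13_hyperosculation
    (α : Fin 2 → Fin 2 → Fin 2 → ℂ)
    (x y z : Fin 2 → ℂ) (hx : x ≠ 0) (hy : y ≠ 0) (hz : z ≠ 0)
    (hXY : ∀ i j, ∑ k, α i j k * z k = 0)
    (hXZ : ∀ i k, ∑ j, α i j k * y j = 0)
    (hYZ : ∀ j k, ∑ i, α i j k * x i = 0) :
    ∃ c : ℂ, ∀ X Y Z : Fin 2 → ℂ,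
      (∑ i, ∑ j, ∑ k, α i j k * X i * Y j * Z k) =
        c * ((x 1 * X 0 - x 0 * X 1) * (y 1 * Y 0 - y 0 * Y 1) *
          (z 1 * Z 0 - z 0 * Z 1)) := by
  choose t ht using fun j k => segre13_ker2 x hx (α 0 j k) (α 1 j k) (by
    have := hYZ j k; simpa [Fin.sum_univ_two] using this)
  have hxne : x 0 ≠ 0 ∨ x 1 ≠ 0 := segre13_ne_aux x hx
  have hsum : ∀ k, t 0 k * y 0 + t 1 k * y 1 = 0 := by
    intro k
    rcases hxne with h0 | h1
    · have := hXZ 1 k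
      simp only [Fin.sum_univ_two] at this
      rw [(ht 0 k).2, (ht 1 k).2] at this
      have : (t 0 k * y 0 + t 1 k * y 1) * x 0 = 0 := by linear_combination -this
      exact (mul_eq_zero.mp this).resolve_right h0
    · have := hXZ 0 k
      simp only [Fin.sum_univ_two] at this
      rw [(ht 0 k).1, (ht 1 k).1] at this
      have : (t 0 k * y 0 + t 1 k * y 1) * x 1 = 0 := by linear_combination this
      exact (mul_eq_zero.mp this).resolve_right h1
  choose s hs using fun k => segre13_ker2 y hy (t 0 k) (t 1 k) (hsum k)
  have hsum2 : s 0 * z 0 + s 1 * z 1 = 0 := by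
    rcases hxne with h0 | h1
    · rcases segre13_ne_aux y hy with g0 | g1
      · have h := hXY 1 1
        simp only [Fin.sum_univ_two] at h
        rw [(ht 1 0).2, (ht 1 1).2, (hs 0).2, (hs 1).2] at h
        have h2 : (s 0 * z 0 + s 1 * z 1) * (y 0 * x 0) = 0 := by linear_combination h
        exact (mul_eq_zero.mp h2).resolve_right (mul_ne_zero g0 h0)
      · have h := hXY 1 0
        simp only [Fin.sum_univ_two] at h
        rw [(ht 0 0).2, (ht 0 1).2, (hs 0).1, (hs 1).1] at h
        have h2 : (s 0 * z 0 + s 1 * z 1) * (y 1 * x 0) = 0 := by linear_combination -h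
        exact (mul_eq_zero.mp h2).resolve_right (mul_ne_zero g1 h0)
    · rcases segre13_ne_aux y hy with g0 | g1
      · have h := hXY 0 1
        simp only [Fin.sum_univ_two] at h
        rw [(ht 1 0).1, (ht 1 1).1, (hs 0).2, (hs 1).2] at h
        have h2 : (s 0 * z 0 + s 1 * z 1) * (y 0 * x 1) = 0 := by linear_combination -h
        exact (mul_eq_zero.mp h2).resolve_right (mul_ne_zero g0 h1)
      · have h := hXY 0 0
        simp only [Fin.sum_univ_two] at h
        rw [(ht 0 0).1, (ht 0 1).1, (hs 0).1, (hs 1).1] at h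
        have h2 : (s 0 * z 0 + s 1 * z 1) * (y 1 * x 1) = 0 := by linear_combination h
        exact (mul_eq_zero.mp h2).resolve_right (mul_ne_zero g1 h1)
  obtain ⟨c, hc0, hc1⟩ := segre13_ker2 z hz (s 0) (s 1) hsum2
  refine ⟨c, fun X Y Z => ?_⟩
  simp only [Fin.sum_univ_two]
  rw [(ht 0 0).1, (ht 0 1).1, (ht 1 0).1, (ht 1 1).1,
    (ht 0 0).2, (ht 0 1).2, (ht 1 0).2, (ht 1 1).2,
    (hs 0).1, (hs 0).2, (hs 1).1, (hs 1).2, hc0, hc1]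
  ring
end

section
/- Polarity for the rational normal curve: let l̄₀, …, l̄₂ₙ be 2n+1 pairwise non-proportional nonzero linear forms in two variables (elements of S¹U* for U = ℂ²); then the binary form ∏_{i=0}^{2n} l̄ᵢ of degree 2n+1 lies in the linear span of the powers l̄₀^{2n+1}, …, l̄₂ₙ^{2n+1}. -/
open MvPolynomial Finset

noncomputable section

namespace RNCPAux
/-- coefficient sums of products of linear univariate polynomials -/
def wcoef (D : ℕ) (u v : Fin D → ℂ) (k : ℕ) : ℂ :=
  ∑ S ∈ (Finset.univ : Finset (Fin D)).powerset.filter (fun S => S.card = k),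
    (∏ i ∈ S, u i) * ∏ i ∈ Sᶜ, v i

lemma coeff_prod_linear (D : ℕ) (u v : Fin D → ℂ) (k : ℕ) :
    (∏ i, (Polynomial.C (u i) * Polynomial.X + Polynomial.C (v i))).coeff k
      = wcoef D u v k := by
  classical
  rw [Finset.prod_add, Polynomial.finset_sum_coeff, wcoef, Finset.sum_filter]
  refine Finset.sum_congr rfl fun S _ => ?_
  have h1 : ∏ i ∈ S, (Polynomial.C (u i) * Polynomial.X)
      = Polynomial.C (∏ i ∈ S, u i) * Polynomial.X ^ S.card := by
    rw [Finset.prod_mul_distrib, Finset.prod_const, map_prod]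
  have h2 : ∏ i ∈ Finset.univ \ S, Polynomial.C (v i)
      = Polynomial.C (∏ i ∈ Sᶜ, v i) := by
    rw [map_prod, Finset.compl_eq_univ_sdiff]
  rw [h1, h2]
  have h3 : Polynomial.C (∏ i ∈ S, u i) * Polynomial.X ^ S.card * Polynomial.C (∏ i ∈ Sᶜ, v i)
      = Polynomial.C ((∏ i ∈ S, u i) * ∏ i ∈ Sᶜ, v i) * Polynomial.X ^ S.card := by
    rw [map_mul]; ring
  rw [h3, Polynomial.coeff_C_mul, Polynomial.coeff_X_pow]
  by_cases h : S.card = k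
  · rw [if_pos h, if_pos h.symm, mul_one]
  · rw [if_neg h, if_neg fun hh => h hh.symm, mul_zero]

lemma wcoef_reflect (D : ℕ) (a b : Fin D → ℂ) (k : ℕ) (hk : k ≤ D) :
    wcoef D b (fun i => -a i) k = (-1 : ℂ) ^ (D - k) * wcoef D a b (D - k) := by
  classical
  rw [wcoef, wcoef, Finset.mul_sum]
  refine Finset.sum_nbij' compl compl ?_ ?_ ?_ ?_ ?_
  · intro S hS
    simp only [Finset.mem_filter, Finset.mem_powerset] at hS ⊢
    refine ⟨Finset.subset_univ _, ?_⟩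
    rw [Finset.card_compl, Fintype.card_fin, hS.2]
  · intro S hS
    simp only [Finset.mem_filter, Finset.mem_powerset] at hS ⊢
    refine ⟨Finset.subset_univ _, ?_⟩
    rw [Finset.card_compl, Fintype.card_fin, hS.2]
    omega
  · intro S _; exact compl_compl S
  · intro S _; exact compl_compl S
  · intro S hS
    simp only [Finset.mem_filter, Finset.mem_powerset] at hS
    have hneg : ∏ i ∈ Sᶜ, (-a i) = (-1 : ℂ) ^ Sᶜ.card * ∏ i ∈ Sᶜ, a i := by
      rw [← Finset.prod_const, ← Finset.prod_mul_distrib]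
      exact Finset.prod_congr rfl fun i _ => by ring
    have hcc : Sᶜ.card = D - k := by
      rw [Finset.card_compl, Fintype.card_fin, hS.2]
    rw [hneg, compl_compl, hcc]
    ring

lemma core (D : ℕ) (hD : Odd D) (a b : Fin D → ℂ) :
    ∑ k ∈ range (D + 1), (k.factorial * (D - k).factorial : ℂ)
      * wcoef D a b k * wcoef D b (fun i => -a i) k = 0 := by
  set w := wcoef D a b with hw
  set G := ∑ k ∈ range (D + 1), (k.factorial * (D - k).factorial : ℂ)
      * w k * wcoef D b (fun i => -a i) k with hG
  have key : ∀ k ≤ D, (-1 : ℂ) ^ (D - k) = -(-1 : ℂ) ^ k := by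
    intro k hk
    have h1 : (-1 : ℂ) ^ (D - k) * (-1 : ℂ) ^ k = (-1 : ℂ) ^ D := by
      rw [← pow_add]; congr 1; omega
    have h2 : (-1 : ℂ) ^ D = -1 := Odd.neg_one_pow hD
    have h3 : (-1 : ℂ) ^ k * (-1 : ℂ) ^ k = 1 := by
      rw [← pow_add, ← two_mul, pow_mul]; norm_num
    calc (-1 : ℂ) ^ (D - k) = (-1 : ℂ) ^ (D - k) * ((-1 : ℂ) ^ k * (-1 : ℂ) ^ k) := by
          rw [h3, mul_one]
      _ = ((-1 : ℂ) ^ (D - k) * (-1 : ℂ) ^ k) * (-1 : ℂ) ^ k := by ring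
      _ = -(-1 : ℂ) ^ k := by rw [h1, h2]; ring
  have hG1 : G = ∑ k ∈ range (D + 1),
      (k.factorial * (D - k).factorial : ℂ) * (-1 : ℂ) ^ (D - k) * (w k * w (D - k)) := by
    refine Finset.sum_congr rfl fun k hk => ?_
    rw [Finset.mem_range, Nat.lt_succ_iff] at hk
    rw [wcoef_reflect D a b k hk]; ring
  have hG2 : G = ∑ k ∈ range (D + 1),
      (k.factorial * (D - k).factorial : ℂ) * (-(-1 : ℂ) ^ k) * (w k * w (D - k)) := by
    rw [hG1]
    refine Finset.sum_congr rfl fun k hk => ?_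
    rw [Finset.mem_range, Nat.lt_succ_iff] at hk
    rw [key k hk]
  have hG3 : G = ∑ k ∈ range (D + 1),
      (k.factorial * (D - k).factorial : ℂ) * ((-1 : ℂ) ^ k) * (w k * w (D - k)) := by
    rw [hG1, ← Finset.sum_range_reflect]
    refine Finset.sum_congr rfl fun k hk => ?_
    rw [Finset.mem_range, Nat.lt_succ_iff] at hk
    have e1 : D + 1 - 1 - k = D - k := by omega
    have e2 : D - (D - k) = k := by omega
    rw [e1, e2]
    ring
  have : G + G = 0 := by
    nth_rewrite 1 [hG2]
    nth_rewrite 1 [hG3]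
    rw [← Finset.sum_add_distrib]
    refine Finset.sum_eq_zero fun k _ => by ring
  have := add_self_eq_zero.mp this
  exact this

lemma key_univ (D : ℕ) (hD : 0 < D) (a b : Fin D → ℂ)
    (hab : ∀ i, a i ≠ 0 ∨ b i ≠ 0)
    (hdet : ∀ i j : Fin D, i ≠ j → a i * b j - a j * b i ≠ 0)
    (c : ℕ → ℂ)
    (hvan : ∀ i, ∑ k ∈ range (D + 1), c k * (a i ^ k * b i ^ (D - k)) = 0) :
    ∃ lam : ℂ, ∀ k ≤ D, c k = lam * wcoef D b (fun i => -a i) k := by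
  classical
  set q : Polynomial ℂ := ∑ k ∈ range (D + 1), Polynomial.C (c k) * Polynomial.X ^ k with hq
  have hqc : ∀ k, q.coeff k = if k ≤ D then c k else 0 := by
    intro k
    rw [hq, Polynomial.finset_sum_coeff]
    simp_rw [Polynomial.coeff_C_mul, Polynomial.coeff_X_pow, mul_ite, mul_one, mul_zero]
    rw [Finset.sum_ite_eq (range (D + 1)) k c]
    simp [Nat.lt_succ_iff]
  have hroot : ∀ i, b i ≠ 0 → q.eval (a i / b i) = 0 := by
    intro i hbi
    have hpow : b i ^ D ≠ 0 := pow_ne_zero _ hbi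
    have h0 : b i ^ D * q.eval (a i / b i) = 0 := by
      rw [hq, Polynomial.eval_finset_sum, Finset.mul_sum, ← hvan i]
      refine Finset.sum_congr rfl fun k hk => ?_
      rw [Finset.mem_range, Nat.lt_succ_iff] at hk
      rw [Polynomial.eval_mul, Polynomial.eval_C, Polynomial.eval_pow, Polynomial.eval_X,
        div_pow]
      have hsplit : b i ^ D = b i ^ k * b i ^ (D - k) := by
        rw [← pow_add]; congr 1; omega
      rw [hsplit]
      field_simp
    exact (mul_eq_zero.mp h0).resolve_left hpow
  -- common final step, abstracted:
  have final : ∀ (P : Polynomial ℂ) (u ν : ℂ), ν ≠ 0 → q = Polynomial.C u * P →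
      (∏ i, (Polynomial.C (b i) * Polynomial.X + Polynomial.C (-a i))) = Polynomial.C ν * P →
      ∃ lam : ℂ, ∀ k ≤ D, c k = lam * wcoef D b (fun i => -a i) k := by
    intro P u ν hν hqP hMP
    refine ⟨u / ν, fun k hk => ?_⟩
    have h1 : c k = u * P.coeff k := by
      have hh := hqc k
      rw [if_pos hk] at hh
      rw [← hh, hqP, Polynomial.coeff_C_mul]
    have h2 : wcoef D b (fun i => -a i) k = ν * P.coeff k := by
      rw [← coeff_prod_linear D b (fun i => -a i) k, hMP, Polynomial.coeff_C_mul]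
    rw [h1, h2]
    field_simp
  by_cases hball : ∀ i, b i ≠ 0
  · -- all b i nonzero
    set r : Fin D → ℂ := fun i => a i / b i with hr
    have hrinj : Function.Injective r := by
      intro i j hij
      by_contra hne
      apply hdet i j hne
      rw [hr] at hij
      simp only at hij
      rw [div_eq_div_iff (hball i) (hball j)] at hij
      rw [hij]; ring
    set P : Polynomial ℂ := ∏ i, (Polynomial.X - Polynomial.C (r i)) with hP
    have hPmonic : P.Monic := Polynomial.monic_prod_of_monic _ _ fun i _ =>
      Polynomial.monic_X_sub_C _
    have hPdeg : P.natDegree = D := by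
      rw [hP, Polynomial.natDegree_prod _ _ fun i _ => Polynomial.X_sub_C_ne_zero _]
      simp
    set u := q.coeff D with hu
    set h : Polynomial ℂ := q - Polynomial.C u * P with hh
    have hhc : ∀ m, D ≤ m → h.coeff m = 0 := by
      intro m hm
      rw [hh, Polynomial.coeff_sub, Polynomial.coeff_C_mul]
      rcases eq_or_lt_of_le hm with heq | hlt
      · have hP1 : P.coeff m = 1 := by
          have := hPmonic.coeff_natDegree
          rwa [hPdeg, heq] at this
        rw [hP1, mul_one, hu, ← heq, sub_self]
      · have h1 : P.coeff m = 0 := Polynomial.coeff_eq_zero_of_natDegree_lt (by omega)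
        have h2 : q.coeff m = 0 := by rw [hqc, if_neg (by omega)]
        rw [h1, h2, mul_zero, sub_zero]
    have hhdeg : h.natDegree < D := by
      have : h.natDegree ≤ D - 1 :=
        Polynomial.natDegree_le_iff_coeff_eq_zero.mpr fun m hm => hhc m (by omega)
      omega
    have hheval : ∀ i, h.eval (r i) = 0 := by
      intro i
      have hPe : P.eval (r i) = 0 := by
        rw [hP, Polynomial.eval_prod]
        refine Finset.prod_eq_zero (Finset.mem_univ i) ?_
        simp
      rw [hh, Polynomial.eval_sub, Polynomial.eval_mul, hPe, hroot i (hball i), mul_zero,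
        sub_zero]
    have hh0 : h = 0 := by
      refine Polynomial.eq_zero_of_natDegree_lt_card_of_eval_eq_zero h hrinj hheval ?_
      simpa using hhdeg
    have hqP : q = Polynomial.C u * P := by
      have := sub_eq_zero.mp hh0
      exact this
    have hMP : (∏ i, (Polynomial.C (b i) * Polynomial.X + Polynomial.C (-a i)))
        = Polynomial.C (∏ i, b i) * P := by
      rw [hP, map_prod, ← Finset.prod_mul_distrib]
      refine Finset.prod_congr rfl fun i _ => ?_
      rw [map_neg, mul_sub, ← map_mul]
      rw [hr]
      simp only
      rw [mul_div_cancel₀ _ (hball i)]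
      ring
    exact final P u _ (Finset.prod_ne_zero_iff.mpr fun i _ => hball i) hqP hMP
  · -- some b i₀ = 0
    push_neg at hball
    obtain ⟨i₀, hbi₀⟩ := hball
    have hai₀ : a i₀ ≠ 0 := (hab i₀).resolve_right fun h => h hbi₀
    have hbother : ∀ i, i ≠ i₀ → b i ≠ 0 := by
      intro i hi hbi
      exact hdet i i₀ hi (by rw [hbi, hbi₀]; ring)
    have hcD : c D = 0 := by
      have h0 := hvan i₀
      rw [Finset.sum_eq_single D] at h0
      · rw [hbi₀, Nat.sub_self, pow_zero, mul_one] at h0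
        have : (a i₀ : ℂ) ^ D ≠ 0 := pow_ne_zero _ hai₀
        exact (mul_eq_zero.mp h0).resolve_right this
      · intro k hk hkne
        rw [Finset.mem_range, Nat.lt_succ_iff] at hk
        rw [hbi₀, zero_pow (by omega), mul_zero, mul_zero]
      · intro hDm
        exact absurd (Finset.mem_range.mpr (by omega)) hDm
    set s : Finset (Fin D) := Finset.univ.erase i₀ with hs
    have hscard : s.card = D - 1 := by
      rw [hs, Finset.card_erase_of_mem (Finset.mem_univ _), Finset.card_univ, Fintype.card_fin]
    set r : Fin D → ℂ := fun i => a i / b i with hr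
    have hrinj : Set.InjOn r s := by
      intro i hi j hj hij
      by_contra hne
      apply hdet i j hne
      rw [hr] at hij
      simp only at hij
      have hi' : b i ≠ 0 := hbother i (Finset.mem_erase.mp (Finset.mem_coe.mp hi)).1
      have hj' : b j ≠ 0 := hbother j (Finset.mem_erase.mp (Finset.mem_coe.mp hj)).1
      rw [div_eq_div_iff hi' hj'] at hij
      rw [hij]; ring
    set P : Polynomial ℂ := ∏ i ∈ s, (Polynomial.X - Polynomial.C (r i)) with hP
    have hPmonic : P.Monic := Polynomial.monic_prod_of_monic _ _ fun i _ =>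
      Polynomial.monic_X_sub_C _
    have hPdeg : P.natDegree = D - 1 := by
      rw [hP, Polynomial.natDegree_prod _ _ fun i _ => Polynomial.X_sub_C_ne_zero _]
      simp [hscard]
    set u := q.coeff (D - 1) with hu
    set h : Polynomial ℂ := q - Polynomial.C u * P with hh
    have hhc : ∀ m, D - 1 ≤ m → h.coeff m = 0 := by
      intro m hm
      rw [hh, Polynomial.coeff_sub, Polynomial.coeff_C_mul]
      rcases eq_or_lt_of_le hm with heq | hlt
      · have hP1 : P.coeff m = 1 := by
          have := hPmonic.coeff_natDegree
          rwa [hPdeg, heq] at this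
        rw [hP1, mul_one, hu, ← heq, sub_self]
      · have h1 : P.coeff m = 0 := Polynomial.coeff_eq_zero_of_natDegree_lt (by omega)
        have h2 : q.coeff m = 0 := by
          rcases eq_or_lt_of_le (show D ≤ m by omega) with rfl | hlt2
          · rw [hqc, if_pos le_rfl, hcD]
          · rw [hqc, if_neg (by omega)]
        rw [h1, h2, mul_zero, sub_zero]
    have hh0 : h = 0 := by
      rcases Nat.lt_or_ge D 2 with hD2 | hD2
      · -- D = 1 : all coefficients vanish
        refine Polynomial.ext fun m => ?_
        rw [Polynomial.coeff_zero]
        exact hhc m (by omega)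
      · have hhdeg : h.natDegree ≤ D - 2 :=
          Polynomial.natDegree_le_iff_coeff_eq_zero.mpr fun m hm => hhc m (by omega)
        refine Polynomial.eq_zero_of_natDegree_lt_card_of_eval_eq_zero' h (s.image r)
          (fun x hx => ?_) ?_
        · obtain ⟨i, hi, rfl⟩ := Finset.mem_image.mp hx
          have hPe : P.eval (r i) = 0 := by
            rw [hP, Polynomial.eval_prod]
            refine Finset.prod_eq_zero hi ?_
            simp
          have hib : b i ≠ 0 := hbother i (by rw [hs, Finset.mem_erase] at hi; exact hi.1)
          rw [hh, Polynomial.eval_sub, Polynomial.eval_mul, hPe, hroot i hib, mul_zero,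
            sub_zero]
        · rw [Finset.card_image_of_injOn hrinj, hscard]
          omega
    have hqP : q = Polynomial.C u * P := sub_eq_zero.mp hh0
    have hMP : (∏ i, (Polynomial.C (b i) * Polynomial.X + Polynomial.C (-a i)))
        = Polynomial.C (-a i₀ * ∏ i ∈ s, b i) * P := by
      rw [← Finset.mul_prod_erase _ _ (Finset.mem_univ i₀), ← hs]
      have h1 : Polynomial.C (b i₀) * Polynomial.X + Polynomial.C (-a i₀)
          = Polynomial.C (-a i₀) := by
        rw [hbi₀, map_zero, zero_mul, zero_add]
      have h2 : ∏ i ∈ s, (Polynomial.C (b i) * Polynomial.X + Polynomial.C (-a i))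
          = Polynomial.C (∏ i ∈ s, b i) * P := by
        rw [hP, map_prod, ← Finset.prod_mul_distrib]
        refine Finset.prod_congr rfl fun i hi => ?_
        have hib : b i ≠ 0 := hbother i (by rw [hs, Finset.mem_erase] at hi; exact hi.1)
        rw [map_neg, mul_sub, ← map_mul, hr]
        simp only
        rw [mul_div_cancel₀ _ hib]
        ring
      rw [h1, h2, map_mul]
      ring
    have hν : (-a i₀ * ∏ i ∈ s, b i) ≠ 0 := by
      refine mul_ne_zero (neg_ne_zero.mpr hai₀) (Finset.prod_ne_zero_iff.mpr fun i hi => ?_)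
      exact hbother i (by rw [hs, Finset.mem_erase] at hi; exact hi.1)
    exact final P u _ hν hqP hMP

lemma fin2_degree (m : Fin 2 →₀ ℕ) : m.degree = m 0 + m 1 := by
  rw [Finsupp.degree, ← Fin.sum_univ_two (f := fun i => m i)]
  exact Finset.sum_subset (Finset.subset_univ _)
    (fun i _ hi => Finsupp.notMem_support_iff.mp hi)

lemma fin2_single (m : Fin 2 →₀ ℕ) (hm : m.degree = 1) :
    m = Finsupp.single 0 1 ∨ m = Finsupp.single 1 1 := by
  rw [fin2_degree] at hm
  rcases Nat.eq_zero_or_pos (m 0) with h0 | h0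
  · right
    ext i
    fin_cases i <;> simp_all [Finsupp.single_apply] <;> omega
  · left
    ext i
    fin_cases i <;> simp_all [Finsupp.single_apply] <;> omega

lemma hom1_eq (f : MvPolynomial (Fin 2) ℂ) (hf : f.IsHomogeneous 1) :
    f = C (coeff (Finsupp.single 0 1) f) * X 0 + C (coeff (Finsupp.single 1 1) f) * X 1 := by
  classical
  have hne : (Finsupp.single (0 : Fin 2) (1 : ℕ)) ≠ Finsupp.single 1 1 := by
    intro h
    have := DFunLike.congr_fun h 0
    simp [Finsupp.single_apply] at this
  apply MvPolynomial.ext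
  intro m
  rw [coeff_add, coeff_C_mul, coeff_C_mul, coeff_X', coeff_X']
  by_cases h0 : m = Finsupp.single 0 1
  · rw [if_pos h0.symm, if_neg (fun hh => hne ((hh.trans h0).symm))]
    rw [h0]; ring
  · by_cases h1 : m = Finsupp.single 1 1
    · rw [if_neg (fun hh => h0 hh.symm), if_pos h1.symm, h1]; ring
    · rw [if_neg (fun hh => h0 hh.symm), if_neg (fun hh => h1 hh.symm)]
      have : coeff m f = 0 := by
        apply hf.coeff_eq_zero
        intro hdeg
        rcases fin2_single m hdeg with h | h
        · exact h0 h
        · exact h1 h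
      rw [this]; ring

set_option synthInstance.maxHeartbeats 1000000 in
theorem main_aux (D : ℕ) (hDodd : Odd D)
    (l : Fin D → MvPolynomial (Fin 2) ℂ)
    (hhom : ∀ i, (l i).IsHomogeneous 1)
    (hne : ∀ i, l i ≠ 0)
    (hprop : ∀ i j, i ≠ j → ∀ c : ℂ, l i ≠ c • l j) :
    (∏ i, l i) ∈ Submodule.span ℂ (Set.range fun i => l i ^ D) := by
  classical
  have hDpos : 0 < D := hDodd.pos
  set a : Fin D → ℂ := fun i => coeff (Finsupp.single 0 1) (l i) with ha
  set b : Fin D → ℂ := fun i => coeff (Finsupp.single 1 1) (l i) with hb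
  have hl : ∀ i, l i = C (a i) * X 0 + C (b i) * X 1 := fun i => hom1_eq _ (hhom i)
  have hab : ∀ i, a i ≠ 0 ∨ b i ≠ 0 := by
    intro i
    by_contra hcon
    push_neg at hcon
    apply hne i
    rw [hl i, hcon.1, hcon.2]
    simp
  have hdet : ∀ i j, i ≠ j → a i * b j - a j * b i ≠ 0 := by
    intro i j hij hzero
    rcases hab j with haj | hbj
    · apply hprop i j hij (a i / a j)
      rw [hl i, hl j, smul_add, smul_eq_C_mul, smul_eq_C_mul, ← mul_assoc, ← mul_assoc,
        ← map_mul, ← map_mul]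
      have h1 : a i / a j * a j = a i := div_mul_cancel₀ _ haj
      have h2 : a i / a j * b j = b i := by
        field_simp
        linear_combination hzero
      rw [h1, h2]
    · apply hprop i j hij (b i / b j)
      rw [hl i, hl j, smul_add, smul_eq_C_mul, smul_eq_C_mul, ← mul_assoc, ← mul_assoc,
        ← map_mul, ← map_mul]
      have h1 : b i / b j * b j = b i := div_mul_cancel₀ _ hbj
      have h2 : b i / b j * a j = a i := by
        field_simp
        linear_combination -hzero
      rw [h1, h2]
  by_contra hmem
  obtain ⟨φ, hφ1, hφ2⟩ := Submodule.exists_dual_map_eq_bot_of_notMem hmem inferInstance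
  have hφ0 : ∀ y ∈ Submodule.span ℂ (Set.range fun i => l i ^ D), φ y = 0 := by
    intro y hy
    have hmem2 : φ y ∈ Submodule.map φ (Submodule.span ℂ (Set.range fun i => l i ^ D)) :=
      Submodule.mem_map_of_mem hy
    rw [hφ2] at hmem2
    exact (Submodule.mem_bot ℂ).mp hmem2
  set ψ : ℕ → ℂ := fun k => φ (X 0 ^ k * X 1 ^ (D - k)) with hψ
  have hpow : ∀ i, φ (l i ^ D)
      = ∑ k ∈ range (D + 1), ((D.choose k : ℂ) * ψ k) * (a i ^ k * b i ^ (D - k)) := by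
    intro i
    rw [hl i, add_pow, map_sum]
    refine Finset.sum_congr rfl fun k hk => ?_
    have hterm : (C (a i) * X 0) ^ k * (C (b i) * X 1) ^ (D - k)
        * ((D.choose k : ℕ) : MvPolynomial (Fin 2) ℂ)
        = ((D.choose k : ℂ) * (a i ^ k * b i ^ (D - k))) • (X 0 ^ k * X 1 ^ (D - k)) := by
      rw [smul_eq_C_mul, mul_pow, mul_pow, ← C_pow, ← C_pow, ← C_eq_coe_nat, map_mul, map_mul]
      ring
    rw [hterm, map_smul, smul_eq_mul, hψ]
    ring
  have hvan : ∀ i, ∑ k ∈ range (D + 1),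
      ((D.choose k : ℂ) * ψ k) * (a i ^ k * b i ^ (D - k)) = 0 := by
    intro i
    rw [← hpow i]
    exact hφ0 _ (Submodule.subset_span ⟨i, rfl⟩)
  obtain ⟨lam, hlam⟩ := key_univ D hDpos a b hab hdet
    (fun k => (D.choose k : ℂ) * ψ k) hvan
  have hprodφ : φ (∏ i, l i) = ∑ k ∈ range (D + 1), wcoef D a b k * ψ k := by
    have hexp : ∏ i, l i = ∑ S ∈ (Finset.univ : Finset (Fin D)).powerset,
        (((∏ i ∈ S, a i) * ∏ i ∈ Sᶜ, b i) • (X 0 ^ S.card * X 1 ^ (D - S.card))) := by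
      calc ∏ i, l i = ∏ i, (C (a i) * X 0 + C (b i) * X 1) :=
            Finset.prod_congr rfl fun i _ => hl i
        _ = ∑ S ∈ (Finset.univ : Finset (Fin D)).powerset,
              (∏ i ∈ S, (C (a i) * X 0)) * ∏ i ∈ Finset.univ \ S, (C (b i) * X 1) :=
            Finset.prod_add _ _ _
        _ = _ := by
            refine Finset.sum_congr rfl fun S hS => ?_
            have hc1 : ∏ i ∈ S, (C (a i) * X (0 : Fin 2))
                = C (∏ i ∈ S, a i) * X 0 ^ S.card := by
              rw [Finset.prod_mul_distrib, Finset.prod_const, map_prod]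
            have hc2 : ∏ i ∈ Finset.univ \ S, (C (b i) * X (1 : Fin 2))
                = C (∏ i ∈ Sᶜ, b i) * X 1 ^ (D - S.card) := by
              rw [Finset.prod_mul_distrib, Finset.prod_const, map_prod,
                ← Finset.compl_eq_univ_sdiff, Finset.card_compl, Fintype.card_fin]
            rw [hc1, hc2, smul_eq_C_mul, map_mul]
            ring
    rw [hexp, map_sum]
    rw [← Finset.sum_fiberwise_of_maps_to (g := fun S : Finset (Fin D) => S.card)
      (t := range (D + 1)) (fun S _ => Finset.mem_range.mpr (by
        show S.card < D + 1
        have hcu := Finset.card_le_univ S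
        simp only [Finset.card_univ, Fintype.card_fin] at hcu
        omega))]
    refine Finset.sum_congr rfl fun k hk => ?_
    rw [wcoef, Finset.sum_mul]
    refine Finset.sum_congr rfl fun S hS => ?_
    rw [Finset.mem_filter] at hS
    rw [map_smul, smul_eq_mul, hS.2, hψ]
  have hfinal : ((D.factorial : ℂ)) * φ (∏ i, l i) = 0 := by
    rw [hprodφ, Finset.mul_sum]
    have hstep : ∀ k ∈ range (D + 1), (D.factorial : ℂ) * (wcoef D a b k * ψ k)
        = lam * ((k.factorial * (D - k).factorial : ℂ)
            * wcoef D a b k * wcoef D b (fun i => -a i) k) := by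
      intro k hk
      rw [Finset.mem_range, Nat.lt_succ_iff] at hk
      have h1 := hlam k hk
      have h2 : ((k.factorial * (D - k).factorial : ℂ)) * (D.choose k : ℂ)
          = (D.factorial : ℂ) := by
        have h3 := Nat.choose_mul_factorial_mul_factorial hk
        push_cast [← h3]
        ring
      rw [← h2]
      linear_combination ((k.factorial : ℂ) * ((D - k).factorial : ℂ) * wcoef D a b k) * h1
    rw [Finset.sum_congr rfl hstep, ← Finset.mul_sum, core D hDodd a b, mul_zero]
  have hfne : (D.factorial : ℂ) ≠ 0 := Nat.cast_ne_zero.mpr (Nat.factorial_ne_zero D)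
  exact hφ1 ((mul_eq_zero.mp hfinal).resolve_left hfne)

end RNCPAux

open RNCPAux in
theorem rational_normal_curve_polarity (n : ℕ)
    (l : Fin (2 * n + 1) → MvPolynomial (Fin 2) ℂ)
    (hhom : ∀ i, (l i).IsHomogeneous 1)
    (hne : ∀ i, l i ≠ 0)
    (hprop : ∀ i j, i ≠ j → ∀ c : ℂ, l i ≠ c • l j) :
    (∏ i, l i) ∈
      Submodule.span ℂ (Set.range fun i => l i ^ (2 * n + 1)) :=
  main_aux (2 * n + 1) ⟨n, by ring⟩ l hhom hne hprop
end
end
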